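/- Let θ ∈ (0, 1/2] and let n ≥ 1 be an integer. If U : S_{T[θ,S_n]} → S_{T[θ,S_n]} is an isometry satisfying −U(S_{T[θ,S_n]}) ⊆ U(S_{T[θ,S_n]}), then −U(e_i) = U(−e_i) for every positive integer i. -/

import Mathlib

open scoped BigOperators

noncomputable section

/-- Projection of a finitely supported vector onto the coordinates in `E`. -/
def tsProj (E : Finset ℕ+) (x : ℕ+ →₀ ℝ) : ℕ+ →₀ ℝ :=
  x.filter fun i => i ∈ E

/-- The Schreier families `S_n` on the positive integers:
`S₁` consists of the sets `F` with `|F| ≤ min F` (together with `∅`), and `S_{n+1}`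
consists of unions `F₁ ∪ ⋯ ∪ F_d` of nonempty members `F₁ < ⋯ < F_d` of `S_n`
with `d ≤ min F₁` (together with `∅`). -/
def Schreier : ℕ → Set (Finset ℕ+)
  | 0 => {F | F.card ≤ 1}
  | 1 => {F | ∀ a ∈ F, F.card ≤ (a : ℕ)}
  | n + 2 =>
      {F | F = ∅ ∨
        ∃ (d : ℕ) (G : Fin d → Finset ℕ+),
          0 < d ∧ (∀ i, G i ∈ Schreier (n + 1)) ∧ (∀ i, (G i).Nonempty) ∧
          (∀ i j : Fin d, i < j → ∀ a ∈ G i, ∀ b ∈ G j, a < b) ∧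
          (∀ i, ∀ a ∈ G i, d ≤ (a : ℕ)) ∧ F = Finset.univ.biUnion G}

/-- A tuple of nonempty finite sets `E 0 < E 1 < ⋯` whose set of minima belongs to `S`. -/
def TsAdmissible (S : Set (Finset ℕ+)) {d : ℕ} (E : Fin d → Finset ℕ+) : Prop :=
  (∀ i, (E i).Nonempty) ∧
  (∀ i j : Fin d, i < j → ∀ a ∈ E i, ∀ b ∈ E j, a < b) ∧
  ∃ μ : Fin d → ℕ+, (∀ i, IsLeast (↑(E i) : Set ℕ+) (μ i)) ∧
    Finset.univ.image μ ∈ S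

/-- The iterated norms `‖·‖_m` in the construction of the Tsirelson norm:
`‖x‖₀` is the supremum norm and
`‖x‖_{m+1} = max(‖x‖_m, sup{θ ∑ᵢ ‖Eᵢ x‖_m : E₁ < ⋯ < E_d, {min Eᵢ} ∈ S})`. -/
def tnormAux (θ : ℝ) (S : Set (Finset ℕ+)) : ℕ → (ℕ+ →₀ ℝ) → ℝ
  | 0, x => ⨆ i, |x i|
  | m + 1, x =>
      max (tnormAux θ S m x)
        (sSup {r : ℝ | ∃ (d : ℕ) (E : Fin d → Finset ℕ+), TsAdmissible S E ∧
          r = θ * ∑ i, tnormAux θ S m (tsProj (E i) x)})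

/-- The Tsirelson norm `‖x‖_{θ,S} = sup_m ‖x‖_m` on `c₀₀`. -/
def tnorm (θ : ℝ) (S : Set (Finset ℕ+)) (x : ℕ+ →₀ ℝ) : ℝ :=
  ⨆ m : ℕ, tnormAux θ S m x

/-- `X`, together with the sequence `e` of unit vectors, is (a realization of) the
Tsirelson space `T[θ, S_n]`: a Banach space containing `c₀₀` isometrically
(w.r.t. the Tsirelson norm) as a dense subspace, in which `(e i)` is a
(1-unconditional) basis, i.e. every `x` has a unique expansion `x = ∑ᵢ aᵢ eᵢ`. -/
structure IsTsirelsonSpace (θ : ℝ) (n : ℕ) (X : Type*) [NormedAddCommGroup X]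
    [NormedSpace ℝ X] (e : ℕ+ → X) : Prop where
  complete : CompleteSpace X
  norm_embed : ∀ a : ℕ+ →₀ ℝ, ‖a.sum fun i c => c • e i‖ = tnorm θ (Schreier n) a
  dense_embed : DenseRange fun a : ℕ+ →₀ ℝ => a.sum fun i c => c • e i
  expansion : ∀ x : X, ∃! a : ℕ+ → ℝ, HasSum (fun i => a i • e i) x

/-!
Choosing `V` with `U (V z) = -U z`, the map `V` is an isometry of the sphere moving every point
to distance `2`, and it suffices to show `V eᵢ = -eᵢ`. Replacing the `i`-th coordinate of `x` by
`c` raises the Tsirelson norm to at most `max |c| (‖x‖ + θ |c|)`, since an admissible family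
meets coordinate `i` in at most one set. For `θ ≤ 1/2` this forces a unit vector at distance `2`
from `σ eᵢ` (`|σ| = 1`) to have `i`-th coordinate `-σ`. So `V eⱼ` and `V (-eⱼ)` have `j`-th
coordinates `-1` and `1`, and as `‖eᵢ ± eⱼ‖ ≤ 1`, the `j`-th coordinate of `V eᵢ` lies within `1`
of both, hence vanishes for `j ≠ i`; its `i`-th coordinate is `-1`.
-/

open Function

/-- The `ℓ¹` norm dominates every `tnormAux`; this keeps the suprema in `tnormAux` and `tnorm`
bounded (an unbounded `sSup` or `⨆` in `ℝ` would be the junk value `0`). -/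
def l1Norm (x : ℕ+ →₀ ℝ) : ℝ := x.sum fun _ c => |c|

lemma l1Norm_nonneg (x : ℕ+ →₀ ℝ) : 0 ≤ l1Norm x :=
  Finset.sum_nonneg fun _ _ => abs_nonneg _

lemma abs_apply_le_l1Norm (x : ℕ+ →₀ ℝ) (j : ℕ+) : |x j| ≤ l1Norm x := by
  by_cases hj : j ∈ x.support
  · exact Finset.single_le_sum (f := fun k => |x k|) (fun _ _ => abs_nonneg _) hj
  · simpa [Finsupp.notMem_support_iff.mp hj] using l1Norm_nonneg x

lemma l1Norm_le_card_support {x : ℕ+ →₀ ℝ} (hx : ∀ k, |x k| ≤ 1) :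
    l1Norm x ≤ x.support.card := by
  simpa [l1Norm, Finsupp.sum] using Finset.sum_le_sum fun k (_ : k ∈ x.support) => hx k

lemma l1Norm_tsProj (E : Finset ℕ+) (x : ℕ+ →₀ ℝ) :
    l1Norm (tsProj E x) = ∑ k ∈ x.support, if k ∈ E then |x k| else 0 := by
  classical
  rw [l1Norm, tsProj, Finsupp.sum, Finsupp.support_filter, Finset.sum_filter]
  refine Finset.sum_congr rfl fun k _ => ?_
  split_ifs with hk
  · rw [Finsupp.filter_apply_pos _ _ hk]
  · rfl

lemma sum_ite_mem_le_of_pairwise_disjoint {d : ℕ} {E : Fin d → Finset ℕ+}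
    (hE : Pairwise (Disjoint on E)) (k : ℕ+) {a : ℝ} (ha : 0 ≤ a) :
    ∑ l, (if k ∈ E l then a else 0) ≤ a := by
  classical
  have hcard : (Finset.univ.filter fun l => k ∈ E l).card ≤ 1 :=
    Finset.card_le_one.mpr fun l hl l' hl' => by
      by_contra hne
      exact Finset.disjoint_left.mp (hE hne) (Finset.mem_filter.mp hl).2
        (Finset.mem_filter.mp hl').2
  rw [← Finset.sum_filter, Finset.sum_const, nsmul_eq_mul]
  exact mul_le_of_le_one_left ha (by exact_mod_cast hcard)

lemma sum_l1Norm_tsProj_le {d : ℕ} {E : Fin d → Finset ℕ+} (hE : Pairwise (Disjoint on E))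
    (x : ℕ+ →₀ ℝ) : ∑ l, l1Norm (tsProj (E l) x) ≤ l1Norm x := by
  simp only [l1Norm_tsProj]
  rw [Finset.sum_comm]
  exact Finset.sum_le_sum fun k _ => sum_ite_mem_le_of_pairwise_disjoint hE k (abs_nonneg _)

lemma TsAdmissible.pairwise_disjoint {S : Set (Finset ℕ+)} {d : ℕ} {E : Fin d → Finset ℕ+}
    (hE : TsAdmissible S E) : Pairwise (Disjoint on E) := by
  intro l l' hne
  refine Finset.disjoint_left.mpr fun k hk hk' => ?_
  rcases hne.lt_or_gt with h | h
  · exact (hE.2.1 l l' h k hk k hk').false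
  · exact (hE.2.1 l' l h k hk' k hk).false

lemma tsProj_update (E : Finset ℕ+) (x : ℕ+ →₀ ℝ) (i : ℕ+) (c : ℝ) :
    tsProj E (x.update i c) = if i ∈ E then (tsProj E x).update i c else tsProj E x := by
  ext k
  by_cases hk : k = i
  · subst hk; split_ifs with h <;> simp [tsProj, h]
  · split_ifs <;> simp [tsProj, Finsupp.filter_apply, Finsupp.update_apply, hk]

lemma sum_tsProj_update_le {d : ℕ} {E : Fin d → Finset ℕ+} (hE : Pairwise (Disjoint on E))
    {f : (ℕ+ →₀ ℝ) → ℝ} {i : ℕ+} {c : ℝ} (hf : ∀ y, f (y.update i c) ≤ f y + |c|)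
    (x : ℕ+ →₀ ℝ) :
    ∑ l, f (tsProj (E l) (x.update i c)) ≤ ∑ l, f (tsProj (E l) x) + |c| := by
  calc ∑ l, f (tsProj (E l) (x.update i c))
      ≤ ∑ l, (f (tsProj (E l) x) + if i ∈ E l then |c| else 0) :=
        Finset.sum_le_sum fun l _ => by
          rw [tsProj_update]
          split_ifs
          exacts [hf _, (add_zero _).ge]
    _ ≤ ∑ l, f (tsProj (E l) x) + |c| := by
        rw [Finset.sum_add_distrib]
        exact add_le_add_right (sum_ite_mem_le_of_pairwise_disjoint hE i (abs_nonneg c)) _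

section TsirelsonNorm

variable {θ : ℝ} {S : Set (Finset ℕ+)}

lemma tnormAux_nonneg : ∀ (m : ℕ) (x : ℕ+ →₀ ℝ), 0 ≤ tnormAux θ S m x
  | 0, _ => Real.iSup_nonneg fun _ => abs_nonneg _
  | m + 1, x => le_max_of_le_left (tnormAux_nonneg m x)

lemma tnormAux_le_succ (m : ℕ) (x : ℕ+ →₀ ℝ) : tnormAux θ S m x ≤ tnormAux θ S (m + 1) x :=
  le_max_left _ _

lemma tnormAux_zero_le_l1Norm (x : ℕ+ →₀ ℝ) : tnormAux θ S 0 x ≤ l1Norm x :=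
  ciSup_le (abs_apply_le_l1Norm x)

lemma abs_apply_le_tnormAux_zero (x : ℕ+ →₀ ℝ) (j : ℕ+) : |x j| ≤ tnormAux θ S 0 x :=
  le_ciSup ⟨l1Norm x, Set.forall_mem_range.2 (abs_apply_le_l1Norm x)⟩ j

variable (hθ0 : 0 ≤ θ) (hθ1 : θ ≤ 1)
include hθ0 hθ1

lemma tnormAux_le_max_l1Norm :
    ∀ (m : ℕ) (x : ℕ+ →₀ ℝ), tnormAux θ S m x ≤ max (tnormAux θ S 0 x) (θ * l1Norm x)
  | 0, _ => le_max_left _ _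
  | m + 1, x => by
    refine max_le (tnormAux_le_max_l1Norm m x) (le_max_of_le_right ?_)
    refine Real.sSup_le ?_ (mul_nonneg hθ0 (l1Norm_nonneg x))
    rintro _ ⟨d, E, hE, rfl⟩
    refine mul_le_mul_of_nonneg_left ?_ hθ0
    refine le_trans (Finset.sum_le_sum fun l _ => ?_) (sum_l1Norm_tsProj_le hE.pairwise_disjoint x)
    exact (tnormAux_le_max_l1Norm m _).trans <| max_le (tnormAux_zero_le_l1Norm _)
      (mul_le_of_le_one_left (l1Norm_nonneg _) hθ1)

lemma tnormAux_le_l1Norm (m : ℕ) (x : ℕ+ →₀ ℝ) : tnormAux θ S m x ≤ l1Norm x :=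
  (tnormAux_le_max_l1Norm hθ0 hθ1 m x).trans <|
    max_le (tnormAux_zero_le_l1Norm x) (mul_le_of_le_one_left (l1Norm_nonneg x) hθ1)

lemma admissible_sum_le_tnormAux_succ {m d : ℕ} {E : Fin d → Finset ℕ+} (hE : TsAdmissible S E)
    (x : ℕ+ →₀ ℝ) : θ * ∑ l, tnormAux θ S m (tsProj (E l) x) ≤ tnormAux θ S (m + 1) x := by
  refine le_max_of_le_right (le_csSup ⟨l1Norm x, ?_⟩ ⟨d, E, hE, rfl⟩)
  rintro _ ⟨d', E', hE', rfl⟩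
  calc θ * ∑ l, tnormAux θ S m (tsProj (E' l) x)
      ≤ 1 * ∑ l, l1Norm (tsProj (E' l) x) :=
        mul_le_mul hθ1 (Finset.sum_le_sum fun l _ => tnormAux_le_l1Norm hθ0 hθ1 m _)
          (Finset.sum_nonneg fun l _ => tnormAux_nonneg m _) zero_le_one
    _ ≤ l1Norm x := by rw [one_mul]; exact sum_l1Norm_tsProj_le hE'.pairwise_disjoint x

lemma tnormAux_le_tnorm (m : ℕ) (x : ℕ+ →₀ ℝ) : tnormAux θ S m x ≤ tnorm θ S x :=
  le_ciSup ⟨l1Norm x, Set.forall_mem_range.2 fun m => tnormAux_le_l1Norm hθ0 hθ1 m x⟩ m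

lemma abs_apply_le_tnorm (x : ℕ+ →₀ ℝ) (j : ℕ+) : |x j| ≤ tnorm θ S x :=
  (abs_apply_le_tnormAux_zero x j).trans (tnormAux_le_tnorm hθ0 hθ1 0 x)

lemma tnormAux_update_le (i : ℕ+) (c : ℝ) :
    ∀ (m : ℕ) (x : ℕ+ →₀ ℝ),
      tnormAux θ S m (x.update i c) ≤ max |c| (tnormAux θ S m x + θ * |c|)
  | 0, x => ciSup_le fun k => by
    rcases eq_or_ne k i with rfl | hk
    · simp
    · rw [Finsupp.update_apply, if_neg hk]
      exact le_max_of_le_right <| le_add_of_le_of_nonneg (abs_apply_le_tnormAux_zero x k)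
        (mul_nonneg hθ0 (abs_nonneg c))
  | m + 1, x => by
    have IH := tnormAux_update_le i c m
    refine max_le ((IH x).trans (max_le_max le_rfl (by gcongr; exact tnormAux_le_succ m x))) ?_
    refine le_max_of_le_right (Real.sSup_le ?_ <|
      add_nonneg (tnormAux_nonneg (m + 1) x) (mul_nonneg hθ0 (abs_nonneg c)))
    rintro _ ⟨d, E, hE, rfl⟩
    have hpiece : ∀ y, tnormAux θ S m (y.update i c) ≤ tnormAux θ S m y + |c| := fun y =>
      (IH y).trans <| max_le (le_add_of_nonneg_left (tnormAux_nonneg m y))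
        (by gcongr; exact mul_le_of_le_one_left (abs_nonneg c) hθ1)
    calc θ * ∑ l, tnormAux θ S m (tsProj (E l) (x.update i c))
        ≤ θ * (∑ l, tnormAux θ S m (tsProj (E l) x) + |c|) :=
          mul_le_mul_of_nonneg_left (sum_tsProj_update_le hE.pairwise_disjoint hpiece x) hθ0
      _ ≤ tnormAux θ S (m + 1) x + θ * |c| := by
          rw [mul_add]
          gcongr
          exact admissible_sum_le_tnormAux_succ hθ0 hθ1 hE x

lemma tnorm_update_le (x : ℕ+ →₀ ℝ) (i : ℕ+) (c : ℝ) :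
    tnorm θ S (x.update i c) ≤ max |c| (tnorm θ S x + θ * |c|) :=
  ciSup_le fun m => (tnormAux_update_le hθ0 hθ1 i c m x).trans
    (max_le_max le_rfl (by gcongr; exact tnormAux_le_tnorm hθ0 hθ1 m x))

end TsirelsonNorm

lemma tnorm_le_one_of_card_support_le_two {θ : ℝ} {S : Set (Finset ℕ+)} (hθ0 : 0 ≤ θ)
    (hθ : θ ≤ 1 / 2) {x : ℕ+ →₀ ℝ} (hx : ∀ k, |x k| ≤ 1) (hcard : x.support.card ≤ 2) :
    tnorm θ S x ≤ 1 := by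
  have hθ1 : θ ≤ 1 := hθ.trans (by norm_num)
  refine ciSup_le fun m => (tnormAux_le_max_l1Norm hθ0 hθ1 m x).trans (max_le (ciSup_le hx) ?_)
  have hl1 : l1Norm x ≤ 2 := (l1Norm_le_card_support hx).trans (by exact_mod_cast hcard)
  nlinarith

open Filter Topology

lemma Finsupp.linearCombination_sum_single {ι X : Type*} [AddCommGroup X] [Module ℝ X]
    (e : ι → X) (a : ι → ℝ) (s : Finset ι) :
    Finsupp.linearCombination ℝ e (∑ k ∈ s, Finsupp.single k (a k)) = ∑ k ∈ s, a k • e k := by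
  simp [map_sum]

lemma HasSum.tendsto_linearCombination_sum_single {ι X : Type*} [AddCommGroup X] [Module ℝ X]
    [TopologicalSpace X] {e : ι → X} {a : ι → ℝ} {v : X} (hsum : HasSum (fun k => a k • e k) v) :
    Tendsto (fun s => Finsupp.linearCombination ℝ e (∑ k ∈ s, Finsupp.single k (a k)))
      atTop (𝓝 v) := by
  have h : Tendsto _ atTop (𝓝 v) := hsum
  simpa only [Finsupp.linearCombination_sum_single] using h

lemma Finsupp.sum_single_apply_of_mem {ι : Type*} [DecidableEq ι] (a : ι → ℝ) {s : Finset ι}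
    {j : ι} (hj : j ∈ s) : (∑ k ∈ s, Finsupp.single k (a k)) j = a j := by
  simp [Finsupp.single_apply, hj]

namespace IsTsirelsonSpace

variable {θ : ℝ} {n : ℕ} {X : Type*} [NormedAddCommGroup X] [NormedSpace ℝ X] {e : ℕ+ → X}
  (hX : IsTsirelsonSpace θ n X e) (hθ0 : 0 ≤ θ)
include hX hθ0

omit hθ0 in
lemma norm_linearCombination (x : ℕ+ →₀ ℝ) :
    ‖Finsupp.linearCombination ℝ e x‖ = tnorm θ (Schreier n) x :=
  hX.norm_embed x

lemma abs_coeff_le_norm (hθ1 : θ ≤ 1) {a : ℕ+ → ℝ} {v : X}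
    (hsum : HasSum (fun k => a k • e k) v) (j : ℕ+) : |a j| ≤ ‖v‖ := by
  classical
  refine ge_of_tendsto hsum.tendsto_linearCombination_sum_single.norm ?_
  filter_upwards [eventually_ge_atTop {j}] with s hs
  rw [hX.norm_linearCombination]
  have h := abs_apply_le_tnorm (S := Schreier n) hθ0 hθ1 (∑ k ∈ s, Finsupp.single k (a k)) j
  rwa [Finsupp.sum_single_apply_of_mem a (Finset.singleton_subset_iff.mp hs)] at h

lemma norm_add_smul_le (hθ1 : θ ≤ 1) {a : ℕ+ → ℝ} {v : X}
    (hsum : HasSum (fun k => a k • e k) v) (i : ℕ+) (c : ℝ) :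
    ‖v + (c - a i) • e i‖ ≤ max |c| (‖v‖ + θ * |c|) := by
  classical
  have hv := hsum.tendsto_linearCombination_sum_single
  refine le_of_tendsto_of_tendsto (hv.add_const _).norm
    (tendsto_const_nhds.max (hv.norm.add_const _)) ?_
  filter_upwards [eventually_ge_atTop {i}] with s hs
  set b := ∑ k ∈ s, Finsupp.single k (a k)
  have hbi : b i = a i := Finsupp.sum_single_apply_of_mem a (Finset.singleton_subset_iff.mp hs)
  have hupdate : Finsupp.linearCombination ℝ e b + (c - a i) • e i
      = Finsupp.linearCombination ℝ e (b.update i c) := by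
    rw [Finsupp.update_eq_sub_add_single, map_add, map_sub, Finsupp.linearCombination_single,
      Finsupp.linearCombination_single, hbi, sub_smul]
    abel
  rw [hupdate, hX.norm_linearCombination, hX.norm_linearCombination]
  exact tnorm_update_le hθ0 hθ1 b i c

variable (hθ : θ ≤ 1 / 2)
include hθ

lemma norm_basis (j : ℕ+) : ‖e j‖ = 1 := by
  have h := hX.norm_linearCombination (Finsupp.single j 1)
  rw [Finsupp.linearCombination_single, one_smul] at h
  refine h ▸ le_antisymm (tnorm_le_one_of_card_support_le_two hθ0 hθ (fun k => ?_) ?_) ?_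
  · rw [Finsupp.single_apply]; split_ifs <;> simp
  · exact (Finset.card_le_card Finsupp.support_single_subset).trans (by simp)
  · simpa using abs_apply_le_tnorm (S := Schreier n) hθ0 (hθ.trans (by norm_num))
      (Finsupp.single j 1) j

lemma norm_basis_add_smul_le {i j : ℕ+} (hij : i ≠ j) {c : ℝ} (hc : |c| ≤ 1) :
    ‖e i + c • e j‖ ≤ 1 := by
  classical
  have h := hX.norm_linearCombination (Finsupp.single i 1 + Finsupp.single j c)
  rw [map_add, Finsupp.linearCombination_single, Finsupp.linearCombination_single, one_smul] at h
  refine h ▸ tnorm_le_one_of_card_support_le_two hθ0 hθ (fun k => ?_) ?_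
  · simp only [Finsupp.add_apply, Finsupp.single_apply]
    split_ifs with hi hj <;> simp_all
  · exact (Finset.card_le_card Finsupp.support_single_add_single_subset).trans
      Finset.card_le_two

lemma coeff_eq_neg_of_norm_sub_smul_eq_two {a : ℕ+ → ℝ} {v : X}
    (hsum : HasSum (fun k => a k • e k) v) (hv : ‖v‖ = 1) {i : ℕ+} {σ : ℝ} (hσ : |σ| = 1)
    (h : ‖v - σ • e i‖ = 2) : a i = -σ := by
  have hθ1 : θ ≤ 1 := hθ.trans (by norm_num)
  have hai : |a i| ≤ 1 := hv ▸ hX.abs_coeff_le_norm hθ0 hθ1 hsum i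
  have hle := hX.norm_add_smul_le hθ0 hθ1 hsum i (a i - σ)
  rw [sub_sub_cancel_left, neg_smul, ← sub_eq_add_neg, h, hv] at hle
  have hdist : |a i - σ| ≤ 2 := (abs_sub _ _).trans (by linarith)
  have htwo : 2 ≤ |a i - σ| := by
    rcases le_max_iff.mp hle with h2 | h2
    · exact h2
    · nlinarith [abs_nonneg (a i - σ)]
  cases abs_cases σ <;> cases abs_cases (a i) <;> cases abs_cases (a i - σ) <;> linarith

lemma isometry_apply_basis_eq_neg {V : Metric.sphere (0 : X) 1 → Metric.sphere (0 : X) 1}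
    (hV : Isometry V) (hanti : ∀ z, dist (V z) z = 2) (i : ℕ+)
    (hi : e i ∈ Metric.sphere (0 : X) 1) : (V ⟨e i, hi⟩ : X) = -e i := by
  have hθ1 : θ ≤ 1 := hθ.trans (by norm_num)
  have hVnorm : ∀ z₁ z₂, ‖(V z₁ : X) - V z₂‖ = ‖(z₁ : X) - z₂‖ := fun z₁ z₂ => by
    rw [← dist_eq_norm, ← dist_eq_norm, ← Subtype.dist_eq, ← Subtype.dist_eq, hV.dist_eq]
  have hpin : ∀ (z : Metric.sphere (0 : X) 1) j {σ : ℝ}, |σ| = 1 → (z : X) = σ • e j →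
      ∀ {b : ℕ+ → ℝ}, HasSum (fun k => b k • e k) (V z : X) → b j = -σ :=
    fun z j σ hσ hz b hb =>
    hX.coeff_eq_neg_of_norm_sub_smul_eq_two hθ0 hθ hb (norm_eq_of_mem_sphere _) hσ
      (by rw [← hz, ← dist_eq_norm, ← Subtype.dist_eq, hanti])
  obtain ⟨c, hc, -⟩ := hX.expansion (V ⟨e i, hi⟩)
  have hci : c i = -1 := hpin _ i abs_one (one_smul ℝ (e i)).symm hc
  have hcj : ∀ j ≠ i, c j = 0 := by
    intro j hji
    have hbound : ∀ σ : ℝ, |σ| = 1 → |c j + σ| ≤ 1 := fun σ hσ => by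
      have hz : σ • e j ∈ Metric.sphere (0 : X) 1 := by
        simp [norm_smul, hσ, hX.norm_basis hθ0 hθ j]
      obtain ⟨b, hb, -⟩ := hX.expansion (V ⟨σ • e j, hz⟩)
      have hdiff : HasSum (fun k => (c k - b k) • e k)
          ((V ⟨e i, hi⟩ : X) - V ⟨σ • e j, hz⟩) := by
        simpa only [sub_smul] using hc.sub hb
      have h := hX.abs_coeff_le_norm hθ0 hθ1 hdiff j
      rw [hpin _ j hσ rfl hb, sub_neg_eq_add, hVnorm, sub_eq_add_neg, ← neg_smul] at h
      exact h.trans (hX.norm_basis_add_smul_le hθ0 hθ hji.symm (by rw [abs_neg, hσ]))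
    have h1 := abs_le.mp (hbound 1 abs_one)
    have h2 := abs_le.mp (hbound (-1) (by simp))
    linarith [h1.1, h2.2]
  have hsingle : HasSum (fun k => c k • e k) (c i • e i) :=
    hasSum_single i fun k hk => by rw [hcj k hk, zero_smul]
  rw [hc.unique hsingle, hci, neg_one_smul]

end IsTsirelsonSpace

lemma isometry_of_comp_eq_neg {E : Type*} [NormedAddCommGroup E]
    {U V : Metric.sphere (0 : E) 1 → Metric.sphere (0 : E) 1} (hU : Isometry U)
    (hUV : ∀ z, (U (V z) : E) = -U z) : Isometry V :=
  Isometry.of_dist_eq fun z₁ z₂ => by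
    rw [← hU.dist_eq, Subtype.dist_eq, hUV, hUV, dist_neg_neg, ← Subtype.dist_eq, hU.dist_eq]

lemma dist_eq_two_of_comp_eq_neg {E : Type*} [NormedAddCommGroup E] [NormedSpace ℝ E]
    {U V : Metric.sphere (0 : E) 1 → Metric.sphere (0 : E) 1} (hU : Isometry U)
    (hUV : ∀ z, (U (V z) : E) = -U z) (z : Metric.sphere (0 : E) 1) : dist (V z) z = 2 := by
  rw [← hU.dist_eq, Subtype.dist_eq, hUV, dist_eq_norm, ← neg_add', norm_neg, ← two_smul ℝ,
    norm_smul, norm_eq_of_mem_sphere]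
  norm_num

theorem tsirelson_sphere_isometry_odd_general
    (θ : ℝ) (hθ0 : 0 < θ) (hθ : θ ≤ 1 / 2) (n : ℕ)
    (X : Type*) [NormedAddCommGroup X] [NormedSpace ℝ X] (e : ℕ+ → X)
    (hX : IsTsirelsonSpace θ n X e)
    (U : Metric.sphere (0 : X) 1 → Metric.sphere (0 : X) 1)
    (hU : Isometry U)
    (hsym : ∀ z : Metric.sphere (0 : X) 1, ∃ w : Metric.sphere (0 : X) 1,
      (U w : X) = -(U z : X)) :
    ∀ (i : ℕ+) (h₁ : e i ∈ Metric.sphere (0 : X) 1)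
      (h₂ : -e i ∈ Metric.sphere (0 : X) 1),
      -((U ⟨e i, h₁⟩ : X)) = (U ⟨-e i, h₂⟩ : X) := by
  intro i h₁ h₂
  choose V hUV using hsym
  have hVi : V ⟨e i, h₁⟩ = ⟨-e i, h₂⟩ := Subtype.ext <|
    hX.isometry_apply_basis_eq_neg hθ0.le hθ (isometry_of_comp_eq_neg hU hUV)
      (dist_eq_two_of_comp_eq_neg hU hUV) i h₁
  rw [← hUV, hVi]

/-- If `U` is an isometry of the unit sphere of `T[θ, S_n]` with
`−U(S) ⊆ U(S)`, then `−U(eᵢ) = U(−eᵢ)` for every `i`. -/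
theorem tsirelson_sphere_isometry_odd
    (θ : ℝ) (hθ0 : 0 < θ) (hθ : θ ≤ 1 / 2) (n : ℕ) (hn : 1 ≤ n)
    (X : Type*) [NormedAddCommGroup X] [NormedSpace ℝ X] (e : ℕ+ → X)
    (hX : IsTsirelsonSpace θ n X e)
    (U : Metric.sphere (0 : X) 1 → Metric.sphere (0 : X) 1)
    (hU : Isometry U)
    (hsym : ∀ z : Metric.sphere (0 : X) 1, ∃ w : Metric.sphere (0 : X) 1,
      (U w : X) = -(U z : X)) :
    ∀ (i : ℕ+) (h₁ : e i ∈ Metric.sphere (0 : X) 1)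
      (h₂ : -e i ∈ Metric.sphere (0 : X) 1),
      -((U ⟨e i, h₁⟩ : X)) = (U ⟨-e i, h₂⟩ : X) :=
  tsirelson_sphere_isometry_odd_general θ hθ0 hθ n X e hX U hU hsym
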